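/- Let d ≥ 1, let μ_j (j ∈ Fin d) be probability measures on ℝ, let μ := ⊗_j μ_j be their product measure on (Fin d → ℝ), and let f : (Fin d → ℝ) → ℝ be bounded and measurable. For u ⊆ Fin d define F_u(x) := ∫ f(x_u : z_{−u}) dμ(z) and f_u := Σ_{v ⊆ u} (−1)^{|u|−|v|} F_v. Fix x ∈ (Fin d → ℝ) and define the value function val_x(u) := F_u(x) − F_∅(x), which satisfies val_x(∅) = 0. Then for every j ∈ Fin d, the Shapley value of j for val_x equals φ_j(val_x) = Σ_{u ⊆ Fin d, j ∈ u} f_u(x) / |u|. -/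

import Mathlib

/-!
The PDD components `f_u(x)` are the Möbius transform on the Boolean lattice (the Harsanyi
dividends) of the game `G(u) = F_u(x)`, and for any game the Shapley value of `j` is
`∑_{u ∋ j} m(u) / |u|`, `m` the Möbius transform. Möbius inversion writes the marginal
contribution `G(s ∪ {j}) - G(s)` as `∑_{t ⊆ s} m(t ∪ {j})`; exchanging sums, the weight of
`m(t ∪ {j})` is `(1/d) ∑_{t ⊆ s ⊆ [d] \ {j}} 1 / C(d-1, |s|)`, which the identity
`C(n-m, k-m) / C(n, k) = C(k, m) / C(n, m)` and the hockey-stick identity evaluate to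
`1 / (|t| + 1)`. Subtracting the constant `F_∅(x)` does not change any marginal contribution.
-/

open MeasureTheory Finset

/-- Partial dependence function: `F_u(x) = ∫ f(x_u : z_{-u}) dμ(z)`, where the hybrid
point `(x_u : z_{-u})` takes coordinate `x j` for `j ∈ u` and `z j` otherwise. -/
noncomputable def partialDep {d : ℕ} (μ : Fin d → Measure ℝ)
    (f : (Fin d → ℝ) → ℝ) (u : Finset (Fin d)) (x : Fin d → ℝ) : ℝ :=
  ∫ z, f (fun j => if j ∈ u then x j else z j) ∂(Measure.pi μ)

/-- PDD component: `f_u = Σ_{v ⊆ u} (-1)^(|u|-|v|) F_v`. -/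
noncomputable def pddComp {d : ℕ} (μ : Fin d → Measure ℝ)
    (f : (Fin d → ℝ) → ℝ) (u : Finset (Fin d)) (x : Fin d → ℝ) : ℝ :=
  ∑ v ∈ u.powerset, (-1 : ℝ) ^ (u.card - v.card) * partialDep μ f v x


/-- The Shapley value of player `j` for the value function `val`. -/
noncomputable def shapley {d : ℕ} (val : Finset (Fin d) → ℝ) (j : Fin d) : ℝ :=
  (1 / (d : ℝ)) * ∑ u ∈ (Finset.univ.erase j).powerset,
    ((Nat.choose (d - 1) u.card : ℝ))⁻¹ * (val (insert j u) - val u)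

namespace Finset

variable {α : Type*} [DecidableEq α]

theorem sum_Icc_eq_sum_powerset_sdiff {M : Type*} [AddCommMonoid M] {s t : Finset α}
    (h : s ⊆ t) (g : Finset α → M) :
    ∑ u ∈ Icc s t, g u = ∑ w ∈ (t \ s).powerset, g (s ∪ w) := by
  rw [Icc_eq_image_powerset h, sum_image]
  intro w₁ hw₁ w₂ hw₂ hw
  have hd₁ := disjoint_sdiff.mono_right (mem_powerset.1 hw₁)
  have hd₂ := disjoint_sdiff.mono_right (mem_powerset.1 hw₂)
  rw [← union_sdiff_cancel_left hd₁, ← union_sdiff_cancel_left hd₂]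
  exact congrArg (· \ s) hw

theorem sum_powerset_sum_powerset_comm {M : Type*} [AddCommMonoid M] (s : Finset α)
    (g : Finset α → Finset α → M) :
    ∑ u ∈ s.powerset, ∑ v ∈ u.powerset, g u v = ∑ v ∈ s.powerset, ∑ u ∈ Icc v s, g u v :=
  sum_comm' fun u v => by
    simp only [mem_powerset, mem_Icc]
    exact ⟨fun ⟨hus, hvu⟩ => ⟨⟨hvu, hus⟩, hvu.trans hus⟩, fun ⟨⟨hvu, hus⟩, _⟩ => ⟨hus, hvu⟩⟩

def moebiusTransform {R : Type*} [CommRing R] (G : Finset α → R) (u : Finset α) : R :=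
  ∑ v ∈ u.powerset, (-1) ^ (#u - #v) * G v

theorem sum_powerset_moebiusTransform {R : Type*} [CommRing R] (G : Finset α → R)
    (s : Finset α) : ∑ u ∈ s.powerset, moebiusTransform G u = G s := by
  have hinner : ∀ v ∈ s.powerset,
      ∑ u ∈ Icc v s, (-1) ^ (#u - #v) * G v = if v = s then G v else 0 := by
    intro v hv
    have hvs := mem_powerset.1 hv
    rw [sum_Icc_eq_sum_powerset_sdiff hvs, ← sum_mul]
    have hcard : ∀ w ∈ (s \ v).powerset, ((-1 : R) ^ (#(v ∪ w) - #v)) = (-1) ^ #w := by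
      intro w hw
      rw [card_union_of_disjoint (disjoint_sdiff.mono_right (mem_powerset.1 hw))]
      simp
    have halt : ∑ w ∈ (s \ v).powerset, (-1 : R) ^ #w = if s \ v = ∅ then 1 else 0 := by
      exact_mod_cast congrArg (Int.cast : ℤ → R) sum_powerset_neg_one_pow_card
    have hempty : s \ v = ∅ ↔ v = s :=
      sdiff_eq_empty_iff_subset.trans ⟨hvs.antisymm, fun h => h.ge⟩
    simp only [sum_congr rfl hcard, halt, hempty, ite_mul, one_mul, zero_mul]
  unfold moebiusTransform
  rw [sum_powerset_sum_powerset_comm, sum_congr rfl hinner, sum_ite_eq']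
  simp

theorem sub_eq_sum_moebiusTransform_insert {R : Type*} [CommRing R] (G : Finset α → R) {a : α}
    {s : Finset α} (ha : a ∉ s) :
    G (insert a s) - G s = ∑ t ∈ s.powerset, moebiusTransform G (insert a t) := by
  rw [← sum_powerset_moebiusTransform G (insert a s), ← sum_powerset_moebiusTransform G s,
    sum_powerset_insert ha, add_sub_cancel_left]

theorem sum_Icc_inv_choose_card {s t : Finset α} (h : s ⊆ t) :
    ∑ u ∈ Icc s t, ((#t).choose #u : ℝ)⁻¹ = (#t + 1) / (#s + 1) := by
  set n := #t
  set m := #s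
  have hm : m ≤ n := card_le_card h
  have hterm : ∀ i ∈ range (n - m + 1),
      ((n - m).choose i : ℝ) * ((n.choose (m + i) : ℝ))⁻¹
        = ((i + m).choose m : ℝ) / n.choose m := by
    intro i hi
    have hi : m + i ≤ n := by rw [mem_range] at hi; omega
    have key := Nat.choose_mul (n := n) (k := m + i) (s := m) (Nat.le_add_right m i)
    rw [Nat.add_sub_cancel_left] at key
    have h₁ : (n.choose (m + i) : ℝ) ≠ 0 := by exact_mod_cast (Nat.choose_pos hi).ne'
    have h₂ : (n.choose m : ℝ) ≠ 0 := by exact_mod_cast (Nat.choose_pos hm).ne'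
    rw [add_comm i m]
    field_simp
    exact_mod_cast (mul_comm _ _).trans key.symm
  calc ∑ u ∈ Icc s t, ((n.choose #u : ℝ))⁻¹
      = ∑ w ∈ (t \ s).powerset, ((n.choose (m + #w) : ℝ))⁻¹ := by
        rw [sum_Icc_eq_sum_powerset_sdiff h]
        refine sum_congr rfl fun w hw => ?_
        rw [card_union_of_disjoint (disjoint_sdiff.mono_right (mem_powerset.1 hw))]
    _ = ∑ i ∈ range (n - m + 1), ((n - m).choose i : ℝ) * ((n.choose (m + i) : ℝ))⁻¹ := by
        rw [sum_powerset_apply_card (fun k => ((n.choose (m + k) : ℝ))⁻¹), card_sdiff_of_subset h]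
        simp only [nsmul_eq_mul]
        rfl
    _ = ∑ i ∈ range (n - m + 1), ((i + m).choose m : ℝ) / n.choose m := sum_congr rfl hterm
    _ = ((n + 1).choose (m + 1) : ℝ) / n.choose m := by
        have hockey := Nat.sum_range_add_choose (n - m) m
        rw [Nat.sub_add_cancel hm] at hockey
        rw [← sum_div, ← Nat.cast_sum, hockey]
    _ = (n + 1) / (m + 1) := by
        have h₁ : (n.choose m : ℝ) ≠ 0 := by exact_mod_cast (Nat.choose_pos hm).ne'
        have key := Nat.add_one_mul_choose_eq n m
        field_simp
        exact_mod_cast key.symm.trans (mul_comm _ _)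

theorem sum_filter_mem_powerset_univ [Fintype α] {M : Type*} [AddCommMonoid M] (a : α)
    (g : Finset α → M) :
    ∑ u ∈ univ.powerset.filter (fun u => a ∈ u), g u
      = ∑ t ∈ (univ.erase a).powerset, g (insert a t) := by
  rw [sum_filter]
  conv_lhs => rw [← insert_erase (mem_univ a), sum_powerset_insert (notMem_erase a _)]
  have hout : ∀ t ∈ (univ.erase a).powerset, a ∉ t :=
    fun t ht hat => notMem_erase a univ (mem_powerset.1 ht hat)
  simp [sum_ite_of_false hout]

end Finset

theorem shapley_sub_const {d : ℕ} (G : Finset (Fin d) → ℝ) (c : ℝ) (j : Fin d) :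
    shapley (fun u => G u - c) j = shapley G j := by
  simp only [shapley, sub_sub_sub_cancel_right]

theorem shapley_eq_sum_moebiusTransform_div_card {d : ℕ} (G : Finset (Fin d) → ℝ) (j : Fin d) :
    shapley G j = ∑ u ∈ univ.powerset.filter (fun u => j ∈ u), moebiusTransform G u / #u := by
  set E := univ.erase j
  have hjE : ∀ s ∈ E.powerset, j ∉ s :=
    fun s hs hjs => notMem_erase j univ (mem_powerset.1 hs hjs)
  have hE : #E = d - 1 := by rw [card_erase_of_mem (mem_univ j), card_univ, Fintype.card_fin]
  have hd : ((d - 1 : ℕ) : ℝ) + 1 = d := by exact_mod_cast Nat.sub_add_cancel j.pos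
  calc shapley G j
      = (1 / d) * ∑ s ∈ E.powerset,
          ((d - 1).choose #s : ℝ)⁻¹ * ∑ t ∈ s.powerset, moebiusTransform G (insert j t) := by
        rw [shapley]
        congr 1
        exact sum_congr rfl fun s hs => by rw [sub_eq_sum_moebiusTransform_insert G (hjE s hs)]
    _ = (1 / d) * ∑ t ∈ E.powerset,
          moebiusTransform G (insert j t) * ∑ s ∈ Icc t E, ((d - 1).choose #s : ℝ)⁻¹ := by
        congr 1
        simp_rw [mul_sum]
        rw [sum_powerset_sum_powerset_comm]
        exact sum_congr rfl fun _ _ => sum_congr rfl fun _ _ => mul_comm _ _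
    _ = ∑ t ∈ E.powerset, moebiusTransform G (insert j t) / #(insert j t) := by
        rw [mul_sum]
        refine sum_congr rfl fun t ht => ?_
        rw [← hE, sum_Icc_inv_choose_card (mem_powerset.1 ht), card_insert_of_notMem (hjE t ht),
          hE, hd]
        have hd0 : (d : ℝ) ≠ 0 := by exact_mod_cast j.pos.ne'
        push_cast
        field_simp
    _ = ∑ u ∈ univ.powerset.filter (fun u => j ∈ u), moebiusTransform G u / #u :=
        (sum_filter_mem_powerset_univ j fun u => moebiusTransform G u / #u).symm

theorem shapley_pdd_general {d : ℕ} (μ : Fin d → Measure ℝ) (f : (Fin d → ℝ) → ℝ)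
    (x : Fin d → ℝ) (j : Fin d) :
    shapley (fun u => partialDep μ f u x - partialDep μ f ∅ x) j =
      ∑ u ∈ Finset.univ.powerset.filter (fun u : Finset (Fin d) => j ∈ u),
        pddComp μ f u x / u.card := by
  rw [shapley_sub_const, shapley_eq_sum_moebiusTransform_div_card]
  rfl

/-- The Shapley value of feature `j` for the value function
`val_x(u) = F_u(x) - F_∅(x)` equals `Σ_{u ∋ j} f_u(x) / |u|`. -/
theorem shapley_pdd {d : ℕ} (hd : 1 ≤ d)
    (μ : Fin d → Measure ℝ) [∀ i, IsProbabilityMeasure (μ i)]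
    (f : (Fin d → ℝ) → ℝ) (hf : Measurable f) (C : ℝ) (hC : ∀ x, |f x| ≤ C)
    (x : Fin d → ℝ) (j : Fin d) :
    shapley (fun u => partialDep μ f u x - partialDep μ f ∅ x) j =
      ∑ u ∈ Finset.univ.powerset.filter (fun u : Finset (Fin d) => j ∈ u),
        pddComp μ f u x / u.card :=
  shapley_pdd_general μ f x j
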